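/- Let W₁, …, W_k ∈ ℝⁿ be linearly independent vectors, each orthogonal to span(X, Z), such that W₁ = blp(Y^{⊥zx} | W₁,…,W_k) where Y^{⊥zx} := Y − blp(Y|X,Z), W₁ ≠ 0, and W₂, …, W_k are each orthogonal to W₁. Then in the least-squares regression blp(Y | X, Z, W₁, …, W_k) = α̂Xᵀ + β̂Z + δ̂₁W₁ + δ̂₂W₂ + ⋯ + δ̂_kW_k, the coefficients δ̂₂ = ⋯ = δ̂_k = 0. -/

import Mathlib

/-!
Since `W₁` is the projection of the residual `Y - blp(Y | X, Z)` onto `span W`, and `span W` is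
orthogonal to `span (X, Z)`, the projection of `Y` onto `span (X, Z, W)` is
`blp(Y | X, Z) + W₁`. Comparing with the regression decomposition, `W₁ - ∑ δᵢ Wᵢ` lies in both
`span (X, Z)` and `span W`, hence vanishes, and linear independence of the `Wᵢ` forces
`δ = (1, 0, …, 0)`.
-/

open scoped BigOperators

/-- Weighted inner product on ℝⁿ: `(A,B) := (∑ i, wᵢ Aᵢ Bᵢ) / (∑ i, wᵢ)`. -/
noncomputable def wip {n : ℕ} (w A B : Fin n → ℝ) : ℝ :=
  (∑ i, w i * A i * B i) / (∑ i, w i)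

/-- `P` is the best linear predictor (orthogonal projection with respect to the
weighted inner product `wip w`) of `A` onto the span of the collection `C`. -/
def IsBlp {n : ℕ} (w : Fin n → ℝ) (C : Set (Fin n → ℝ)) (A P : Fin n → ℝ) : Prop :=
  P ∈ Submodule.span ℝ C ∧ ∀ v ∈ Submodule.span ℝ C, wip w (A - P) v = 0

open Submodule

section WeightedInnerProduct

variable {n : ℕ}

lemma wip_comm (w A B : Fin n → ℝ) : wip w A B = wip w B A := by
  simp only [wip, mul_right_comm]

lemma wip_add_left (w A A' B : Fin n → ℝ) : wip w (A + A') B = wip w A B + wip w A' B := by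
  simp only [wip, Pi.add_apply, mul_add, add_mul, Finset.sum_add_distrib, add_div]

lemma wip_smul_left (w : Fin n → ℝ) (c : ℝ) (A B : Fin n → ℝ) :
    wip w (c • A) B = c * wip w A B := by
  rw [wip, wip, ← mul_div_assoc, Finset.mul_sum]
  congr 1
  exact Finset.sum_congr rfl fun i _ => by rw [Pi.smul_apply, smul_eq_mul]; ring

noncomputable def wipForm (w : Fin n → ℝ) : LinearMap.BilinForm ℝ (Fin n → ℝ) :=
  LinearMap.mk₂ ℝ (wip w) (wip_add_left w) (fun c A B => wip_smul_left w c A B)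
    (fun A B B' => by rw [wip_comm, wip_add_left, wip_comm w B, wip_comm w B'])
    (fun c A B => by rw [smul_eq_mul, wip_comm, wip_smul_left, wip_comm])

@[simp]
lemma wipForm_apply (w A B : Fin n → ℝ) : wipForm w A B = wip w A B := rfl

lemma wip_sub_left (w A A' B : Fin n → ℝ) : wip w (A - A') B = wip w A B - wip w A' B :=
  (wipForm w).map_sub₂ A A' B

lemma wip_add_right (w A B B' : Fin n → ℝ) : wip w A (B + B') = wip w A B + wip w A B' :=
  (wipForm w A).map_add B B'

lemma eq_zero_of_wip_self_eq_zero {w : Fin n → ℝ} (hw : ∀ i, 0 < w i) {v : Fin n → ℝ}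
    (h : wip w v v = 0) : v = 0 := by
  funext i
  have hsum : 0 < ∑ j, w j := Finset.sum_pos (fun j _ => hw j) ⟨i, Finset.mem_univ i⟩
  have hnum : ∑ j, w j * v j * v j = 0 := by simpa [wip, hsum.ne'] using h
  have hterm := (Finset.sum_eq_zero_iff_of_nonneg fun j _ => by
    rw [mul_assoc]; exact mul_nonneg (hw j).le (mul_self_nonneg (v j))).mp hnum i
      (Finset.mem_univ i)
  simpa [(hw i).ne'] using hterm

lemma wip_eq_zero_of_mem_span {w : Fin n → ℝ} {S : Set (Fin n → ℝ)} {M : Submodule ℝ (Fin n → ℝ)}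
    (h : ∀ s ∈ S, ∀ v ∈ M, wip w s v = 0) {u : Fin n → ℝ} (hu : u ∈ span ℝ S) :
    ∀ v ∈ M, wip w u v = 0 := by
  have hS : S ⊆ M.orthogonalBilin (wipForm w).flip := fun s hs v hv => by simpa using h s hs v hv
  simpa using span_le.mpr hS hu

end WeightedInnerProduct

namespace IsBlp

variable {n : ℕ} {w : Fin n → ℝ} {A P Q : Fin n → ℝ}

lemma unique (hw : ∀ i, 0 < w i) {C : Set (Fin n → ℝ)} (hP : IsBlp w C A P)
    (hQ : IsBlp w C A Q) : P = Q := by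
  have hmem : P - Q ∈ span ℝ C := sub_mem hP.1 hQ.1
  have hself : wip w (P - Q) (P - Q) = 0 := calc
    wip w (P - Q) (P - Q) = wip w (A - Q) (P - Q) - wip w (A - P) (P - Q) := by
      rw [← wip_sub_left, sub_sub_sub_cancel_left]
    _ = 0 := by rw [hQ.2 _ hmem, hP.2 _ hmem, sub_zero]
  exact sub_eq_zero.mp (eq_zero_of_wip_self_eq_zero hw hself)

lemma add_of_orthogonal {S T : Set (Fin n → ℝ)}
    (hTS : ∀ u ∈ span ℝ T, ∀ v ∈ span ℝ S, wip w u v = 0)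
    (hP : IsBlp w S A P) (hQ : IsBlp w T (A - P) Q) : IsBlp w (S ∪ T) A (P + Q) := by
  refine ⟨add_mem (span_mono Set.subset_union_left hP.1) (span_mono Set.subset_union_right hQ.1),
    fun v hv => ?_⟩
  rw [span_union] at hv
  obtain ⟨a, ha, b, hb, rfl⟩ := mem_sup.mp hv
  rw [sub_add_eq_sub_sub, wip_add_right, hQ.2 b hb, wip_sub_left, hP.2 a ha, hTS Q hQ.1 a ha]
  ring

end IsBlp

lemma LinearIndependent.eq_pi_single_of_sum_eq {ι R M : Type*} [Fintype ι] [DecidableEq ι]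
    [Semiring R] [AddCommMonoid M] [Module R M] {v : ι → M} (hv : LinearIndependent R v)
    {c : ι → R} {i₀ : ι} (h : ∑ i, c i • v i = v i₀) : c = Pi.single i₀ 1 :=
  funext <| Fintype.linearIndependent_iffₛ.mp hv c (Pi.single i₀ 1) <| by
    simp [h, Pi.single_apply, ite_smul]

theorem stmt17_general {n k : ℕ} (hk : 0 < k) (w : Fin n → ℝ) (hw : ∀ i, 0 < w i)
    (X : Set (Fin n → ℝ))
    (Y Z : Fin n → ℝ) (W : Fin k → (Fin n → ℝ))
    (hWind : LinearIndependent ℝ W)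
    (hWorth : ∀ i, ∀ v ∈ Submodule.span ℝ (insert Z X), wip w (W i) v = 0)
    (Pyzx : Fin n → ℝ) (hPyzx : IsBlp w (insert Z X) Y Pyzx)
    (hW1 : IsBlp w (Set.range W) (Y - Pyzx) (W ⟨0, hk⟩))
    (P : Fin n → ℝ) (hP : IsBlp w (insert Z X ∪ Set.range W) Y P)
    (betahat : ℝ) (delta : Fin k → ℝ)
    (hdecomp : P - betahat • Z - (∑ i, delta i • W i) ∈ Submodule.span ℝ X) :
    ∀ j : Fin k, j ≠ ⟨0, hk⟩ → delta j = 0 := by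
  set i₀ : Fin k := ⟨0, hk⟩
  have horth : ∀ u ∈ span ℝ (Set.range W), ∀ v ∈ span ℝ (insert Z X), wip w u v = 0 :=
    fun u => wip_eq_zero_of_mem_span (by rintro _ ⟨i, rfl⟩; exact hWorth i)
  have hPW : P = Pyzx + W i₀ := hP.unique hw (hPyzx.add_of_orthogonal horth hW1)
  have hresW : W i₀ - ∑ i, delta i • W i ∈ span ℝ (Set.range W) :=
    sub_mem (subset_span ⟨i₀, rfl⟩) (sum_mem fun i _ => smul_mem _ _ (subset_span ⟨i, rfl⟩))
  have hresZX : W i₀ - ∑ i, delta i • W i ∈ span ℝ (insert Z X) := by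
    have e : W i₀ - ∑ i, delta i • W i =
        (P - betahat • Z - ∑ i, delta i • W i) + betahat • Z - Pyzx := by
      rw [hPW]; abel
    rw [e]
    exact sub_mem (add_mem (span_mono (Set.subset_insert _ _) hdecomp)
      (smul_mem _ _ (subset_span (Set.mem_insert _ _)))) hPyzx.1
  have hres : W i₀ - ∑ i, delta i • W i = 0 :=
    eq_zero_of_wip_self_eq_zero hw (horth _ hresW _ hresZX)
  have hdelta : delta = Pi.single i₀ 1 := hWind.eq_pi_single_of_sum_eq (sub_eq_zero.mp hres).symm
  intro j hj
  simp [hdelta, hj]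

/-- let `W₁, …, W_k` be linearly independent vectors, each orthogonal
to `span(X,Z)`, with `W₁ = blp(Y^{⊥zx} | W₁,…,W_k) ≠ 0` and `W₂, …, W_k` orthogonal to
`W₁`. Then in the least-squares regression of `Y` on `(X, Z, W₁, …, W_k)` the
coefficients `δ̂₂ = ⋯ = δ̂_k = 0`. -/
theorem stmt17 {n k : ℕ} (hk : 0 < k) (w : Fin n → ℝ) (hw : ∀ i, 0 < w i)
    (X : Set (Fin n → ℝ)) (hXfin : X.Finite)
    (h1 : (fun _ => (1 : ℝ)) ∈ Submodule.span ℝ X)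
    (Y Z : Fin n → ℝ) (W : Fin k → (Fin n → ℝ))
    (hWind : LinearIndependent ℝ W)
    (hWorth : ∀ i, ∀ v ∈ Submodule.span ℝ (insert Z X), wip w (W i) v = 0)
    (Pyzx : Fin n → ℝ) (hPyzx : IsBlp w (insert Z X) Y Pyzx)
    (hW1 : IsBlp w (Set.range W) (Y - Pyzx) (W ⟨0, hk⟩))
    (hW1ne : W ⟨0, hk⟩ ≠ 0)
    (hWperp : ∀ j : Fin k, j ≠ ⟨0, hk⟩ → wip w (W j) (W ⟨0, hk⟩) = 0)
    (hind : LinearIndependent ℝ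
      (fun v : (insert Z X ∪ Set.range W : Set (Fin n → ℝ)) => (v : Fin n → ℝ)))
    (P : Fin n → ℝ) (hP : IsBlp w (insert Z X ∪ Set.range W) Y P)
    (betahat : ℝ) (delta : Fin k → ℝ)
    (hdecomp : P - betahat • Z - (∑ i, delta i • W i) ∈ Submodule.span ℝ X) :
    ∀ j : Fin k, j ≠ ⟨0, hk⟩ → delta j = 0 :=
  stmt17_general hk w hw X Y Z W hWind hWorth Pyzx hPyzx hW1 P hP betahat delta hdecomp
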